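/- arXiv:1310.7462 — 2 statements merged into one kernel-verified Lean document; each statement's English description precedes it below -/
import Mathlib

section
/- Under the posterior π(κ | x, τ) ∝ κ^{a-1/2}(1-κ)^{-a-1} L((1/τ²)(1/κ-1)) e^{-κx²/2} on (0,1), if L is bounded above by M > 0 on (0,∞), then for any fixed ε ∈ (0,1) and τ > 0, P(κ < ε | x, τ) ≤ (KM/a) ε^a (1-ε)^{-a} e^{x²/2} τ^{2a} (1+o(1)), where the o(1) term is uniform in x and vanishes as τ → 0. -/
/-!
Substituting `u = τ⁻² (1/κ - 1)` turns the normalizer at `x = 0` into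
`τ^{-2a} J(τ)` with `J(τ) = ∫₀^∞ u^{-a-1} L(u) (1 + τ² u)^{-1/2} du`, and `J(τ) → 1/K` as
`τ → 0` by dominated convergence. At general `x` the normalizer is at least `e^{-x²/2}` times
the one at `x = 0`, while on `(0, ε)` the integrand is at most `M κ^{a-1} (1-κ)^{-a-1}`, whose
integral is `ε^a (1-ε)^{-a} / a` (an antiderivative is `(κ / (1-κ))^a / a`). Hence the ratio
is bounded as claimed with `1 + o(1) = 1 / (K J(τ))`.
-/

open MeasureTheory Filter Set Topology

/-- The unnormalized posterior density of the shrinkage coefficient `κ ∈ (0,1)`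
given observation `x` and global parameter `τ`. -/
noncomputable def postDens (a : ℝ) (L : ℝ → ℝ) (τ x κ : ℝ) : ℝ :=
  κ ^ (a - 1/2) * (1 - κ) ^ (-a - 1) * L ((1 / τ ^ 2) * (1 / κ - 1)) *
    Real.exp (-(κ * x ^ 2) / 2)

lemma hasDerivAt_rpow_div_one_sub {a κ : ℝ} (ha : a ≠ 0) (hκ : κ ∈ Ioo (0:ℝ) 1) :
    HasDerivAt (fun t => (t / (1 - t)) ^ a / a) (κ ^ (a - 1) * (1 - κ) ^ (-a - 1)) κ := by
  obtain ⟨hκ0, hκ1⟩ := hκ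
  have h1κ : 0 < 1 - κ := sub_pos.2 hκ1
  have hquot : HasDerivAt (fun t => t / (1 - t)) (1 / (1 - κ) ^ 2) κ :=
    ((hasDerivAt_id κ).div ((hasDerivAt_id κ).const_sub 1) h1κ.ne').congr_deriv (by
      simp only [id]; field_simp; ring)
  refine (((Real.hasDerivAt_rpow_const (Or.inl (div_pos hκ0 h1κ).ne')).comp κ hquot).div_const
    a).congr_deriv ?_
  rw [Real.div_rpow hκ0.le h1κ.le, show -a - 1 = (-(a - 1)) + (-2 : ℝ) by ring,
    Real.rpow_add h1κ, Real.rpow_neg h1κ.le, Real.rpow_neg h1κ.le, Real.rpow_two]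
  field_simp

lemma integral_Ioo_rpow_mul_one_sub_rpow {a ε : ℝ} (ha : 0 < a) (hε : ε ∈ Ioo (0:ℝ) 1) :
    IntegrableOn (fun κ => κ ^ (a - 1) * (1 - κ) ^ (-a - 1)) (Ioo 0 ε) ∧
      ∫ κ in Ioo 0 ε, κ ^ (a - 1) * (1 - κ) ^ (-a - 1) = ε ^ a * (1 - ε) ^ (-a) / a := by
  obtain ⟨hε0, hε1⟩ := hε
  have hderiv : ∀ κ ∈ Ioo 0 ε, HasDerivAt (fun t => (t / (1 - t)) ^ a / a)
      (κ ^ (a - 1) * (1 - κ) ^ (-a - 1)) κ :=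
    fun κ hκ => hasDerivAt_rpow_div_one_sub ha.ne' ⟨hκ.1, hκ.2.trans hε1⟩
  have hcont : ContinuousOn (fun t => (t / (1 - t)) ^ a / a) (Icc 0 ε) := by
    refine ((continuousOn_id.div (continuousOn_const.sub continuousOn_id) ?_).rpow_const
      fun _ _ => Or.inr ha.le).div_const a
    exact fun t ht => (sub_pos.2 (ht.2.trans_lt hε1)).ne'
  have hint : IntegrableOn (fun κ => κ ^ (a - 1) * (1 - κ) ^ (-a - 1)) (Ioc 0 ε) :=
    intervalIntegral.integrableOn_deriv_of_nonneg hcont hderiv fun κ hκ => by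
      have : 0 < 1 - κ := by linarith [hκ.2]
      have := hκ.1
      positivity
  refine ⟨hint.mono_set Ioo_subset_Ioc_self, ?_⟩
  rw [← integral_Ioc_eq_integral_Ioo, ← intervalIntegral.integral_of_le hε0.le,
    intervalIntegral.integral_eq_sub_of_hasDerivAt_of_le hε0.le hcont hderiv
      ((intervalIntegrable_iff_integrableOn_Ioc_of_le hε0.le).2 hint),
    Real.div_rpow hε0.le (by linarith), Real.rpow_neg (by linarith)]
  simp [Real.zero_rpow ha.ne', div_eq_mul_inv]

lemma norm_one_add_sq_mul_rpow_le_one {p : ℝ} (hp : p ≤ 0) (τ : ℝ) {u : ℝ} (hu : 0 ≤ u) :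
    ‖(1 + τ ^ 2 * u) ^ p‖ ≤ 1 := by
  have hbase : 1 ≤ 1 + τ ^ 2 * u := le_add_of_nonneg_right (by positivity)
  rw [Real.norm_of_nonneg (Real.rpow_nonneg (zero_le_one.trans hbase) p)]
  exact Real.rpow_le_one_of_one_le_of_nonpos hbase hp

lemma integrableOn_mul_one_add_sq_mul_rpow {φ : ℝ → ℝ} {p : ℝ} (hp : p ≤ 0)
    (hφ : IntegrableOn φ (Ioi 0)) (τ : ℝ) :
    IntegrableOn (fun u => φ u * (1 + τ ^ 2 * u) ^ p) (Ioi 0) :=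
  hφ.mul_bdd ((by fun_prop : Continuous fun u : ℝ => 1 + τ ^ 2 * u).measurable.pow_const p
      |>.aestronglyMeasurable)
    (by filter_upwards [ae_restrict_mem measurableSet_Ioi] with u hu
        exact norm_one_add_sq_mul_rpow_le_one hp τ (le_of_lt hu))

lemma tendsto_setIntegral_mul_one_add_sq_mul_rpow {φ : ℝ → ℝ} {p : ℝ} (hp : p ≤ 0)
    (hφ : IntegrableOn φ (Ioi 0)) :
    Tendsto (fun τ => ∫ u in Ioi 0, φ u * (1 + τ ^ 2 * u) ^ p) (𝓝 0)
      (𝓝 (∫ u in Ioi 0, φ u)) := by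
  refine tendsto_integral_filter_of_dominated_convergence (fun u => ‖φ u‖)
    (Eventually.of_forall fun τ =>
      (integrableOn_mul_one_add_sq_mul_rpow hp hφ τ).aestronglyMeasurable)
    (Eventually.of_forall fun τ => ?_) hφ.norm (Eventually.of_forall fun u => ?_)
  · filter_upwards [ae_restrict_mem measurableSet_Ioi] with u hu
    rw [norm_mul]
    exact mul_le_of_le_one_right (norm_nonneg _) (norm_one_add_sq_mul_rpow_le_one hp τ hu.le)
  · have hcont : ContinuousAt (fun τ : ℝ => (1 + τ ^ 2 * u) ^ p) 0 :=
      ContinuousAt.rpow_const (by fun_prop) (Or.inl (by simp))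
    simpa using hcont.tendsto.const_mul (φ u)

section InvSubOne

variable {c : ℝ}

lemma hasDerivAt_mul_one_div_sub_one {κ : ℝ} (hκ : κ ≠ 0) :
    HasDerivAt (fun t => c * (1 / t - 1)) (-(c / κ ^ 2)) κ := by
  simpa [one_div, div_eq_mul_inv] using ((hasDerivAt_inv hκ).sub_const 1).const_mul c

lemma strictAntiOn_mul_one_div_sub_one (hc : 0 < c) :
    StrictAntiOn (fun t => c * (1 / t - 1)) (Ioo 0 1) := fun _ hx _ _ hxy =>
  mul_lt_mul_of_pos_left (sub_lt_sub_right (one_div_lt_one_div_of_lt hx.1 hxy) 1) hc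

lemma mul_one_div_sub_one_pos (hc : 0 < c) {κ : ℝ} (hκ : κ ∈ Ioo (0:ℝ) 1) :
    0 < c * (1 / κ - 1) :=
  mul_pos hc (sub_pos.2 ((one_lt_div hκ.1).2 hκ.2))

lemma image_mul_one_div_sub_one (hc : 0 < c) :
    (fun t => c * (1 / t - 1)) '' Ioo 0 1 = Ioi 0 := by
  ext u
  simp only [mem_image, mem_Ioi, mem_Ioo]
  constructor
  · rintro ⟨κ, ⟨hκ0, hκ1⟩, rfl⟩
    exact mul_one_div_sub_one_pos hc ⟨hκ0, hκ1⟩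
  · intro hu
    refine ⟨c / (c + u), ⟨by positivity, (div_lt_one (by positivity)).2 (by linarith)⟩, ?_⟩
    field_simp
    ring

lemma integrableOn_Ioi_iff_integrableOn_Ioo_mul_one_div_sub_one (hc : 0 < c) (g : ℝ → ℝ) :
    IntegrableOn g (Ioi 0) ↔
      IntegrableOn (fun κ => c / κ ^ 2 * g (c * (1 / κ - 1))) (Ioo 0 1) := by
  rw [← image_mul_one_div_sub_one hc, integrableOn_image_iff_integrableOn_abs_deriv_smul
    measurableSet_Ioo (fun κ hκ => (hasDerivAt_mul_one_div_sub_one hκ.1.ne').hasDerivWithinAt)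
    (strictAntiOn_mul_one_div_sub_one hc).injOn]
  refine integrableOn_congr_fun (fun κ hκ => ?_) measurableSet_Ioo
  simp only [abs_neg, smul_eq_mul, abs_of_pos (div_pos hc (pow_pos hκ.1 2))]

lemma integral_Ioi_eq_integral_Ioo_mul_one_div_sub_one (hc : 0 < c) (g : ℝ → ℝ) :
    ∫ u in Ioi 0, g u = ∫ κ in Ioo 0 1, c / κ ^ 2 * g (c * (1 / κ - 1)) := by
  rw [← image_mul_one_div_sub_one hc, integral_image_eq_integral_abs_deriv_smul
    measurableSet_Ioo (fun κ hκ => (hasDerivAt_mul_one_div_sub_one hκ.1.ne').hasDerivWithinAt)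
    (strictAntiOn_mul_one_div_sub_one hc).injOn]
  refine setIntegral_congr_fun measurableSet_Ioo (fun κ hκ => ?_)
  simp only [abs_neg, smul_eq_mul, abs_of_pos (div_pos hc (pow_pos hκ.1 2))]

end InvSubOne

lemma div_sq_mul_rpow_mul_rpow_eq (a : ℝ) {τ κ : ℝ} (hτ : 0 < τ) (hκ : κ ∈ Ioo (0:ℝ) 1) :
    1 / τ ^ 2 / κ ^ 2 * ((1 / τ ^ 2 * (1 / κ - 1)) ^ (-a - 1) *
        (1 + τ ^ 2 * (1 / τ ^ 2 * (1 / κ - 1))) ^ (-(1/2) : ℝ)) =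
      τ ^ (2 * a) * (κ ^ (a - 1/2) * (1 - κ) ^ (-a - 1)) := by
  obtain ⟨hκ0, hκ1⟩ := hκ
  have h1κ : 0 < 1 - κ := sub_pos.2 hκ1
  rw [Real.rpow_mul hτ.le, Real.rpow_two]
  generalize hT : τ ^ 2 = T
  have hT0 : 0 < T := hT ▸ by positivity
  have hw : 1 + T * (1 / T * (1 / κ - 1)) = κ⁻¹ := by field_simp; ring
  have hu : 1 / T * (1 / κ - 1) = (1 - κ) * (T * κ)⁻¹ := by field_simp
  rw [hw, hu, Real.mul_rpow h1κ.le (by positivity), Real.inv_rpow (by positivity),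
    Real.mul_rpow hT0.le hκ0.le, Real.inv_rpow hκ0.le, Real.rpow_neg hκ0.le, inv_inv,
    show -a - 1 = -(a + 1) by ring, Real.rpow_neg hT0.le, Real.rpow_neg hκ0.le,
    Real.rpow_add_one hT0.ne', Real.rpow_add_one hκ0.ne', Real.rpow_sub hκ0]
  have hsqrt : (κ ^ (1/2 : ℝ)) ^ 2 = κ := by
    rw [← Real.sqrt_eq_rpow, Real.sq_sqrt hκ0.le]
  field_simp
  rw [hsqrt]

section Posterior

variable {a : ℝ} {L : ℝ → ℝ} {τ : ℝ}

lemma postDens_zero (κ : ℝ) :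
    postDens a L τ 0 κ = κ ^ (a - 1/2) * (1 - κ) ^ (-a - 1) * L (1 / τ ^ 2 * (1 / κ - 1)) := by
  simp [postDens]

lemma postDens_eq_mul_exp (x κ : ℝ) :
    postDens a L τ x κ = postDens a L τ 0 κ * Real.exp (-(κ * x ^ 2) / 2) := by
  rw [postDens_zero, postDens]

lemma postDens_nonneg (hτ : τ ≠ 0) (hL : ∀ t > 0, 0 ≤ L t) (x : ℝ) {κ : ℝ}
    (hκ : κ ∈ Ioo (0:ℝ) 1) : 0 ≤ postDens a L τ x κ := by
  have := hL _ (mul_one_div_sub_one_pos (by positivity : 0 < 1 / τ ^ 2) hκ)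
  have := hκ.1
  have := sub_pos.2 hκ.2
  unfold postDens
  positivity

lemma postDens_pos (hτ : τ ≠ 0) (hL : ∀ t > 0, 0 < L t) (x : ℝ) {κ : ℝ}
    (hκ : κ ∈ Ioo (0:ℝ) 1) : 0 < postDens a L τ x κ := by
  have := hL _ (mul_one_div_sub_one_pos (by positivity : 0 < 1 / τ ^ 2) hκ)
  have := hκ.1
  have := sub_pos.2 hκ.2
  unfold postDens
  positivity

lemma exp_neg_mul_sq_div_two_le_one {κ : ℝ} (hκ : 0 ≤ κ) (x : ℝ) :
    Real.exp (-(κ * x ^ 2) / 2) ≤ 1 :=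
  Real.exp_le_one_iff.2 (by nlinarith [sq_nonneg x])

lemma integrableOn_postDens (h₀ : IntegrableOn (postDens a L τ 0) (Ioo 0 1)) (x : ℝ) :
    IntegrableOn (postDens a L τ x) (Ioo 0 1) := by
  have hexp : ∀ᵐ κ ∂(volume.restrict (Ioo (0:ℝ) 1)), ‖Real.exp (-(κ * x ^ 2) / 2)‖ ≤ 1 := by
    filter_upwards [ae_restrict_mem measurableSet_Ioo] with κ hκ
    rw [Real.norm_of_nonneg (Real.exp_nonneg _)]
    exact exp_neg_mul_sq_div_two_le_one hκ.1.le x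
  have h := h₀.mul_bdd
    (by fun_prop : Continuous fun κ : ℝ => Real.exp (-(κ * x ^ 2) / 2)).aestronglyMeasurable hexp
  simp only [← postDens_eq_mul_exp] at h
  exact h

lemma setIntegral_postDens_zero_pos (hτ : τ ≠ 0) (hL : ∀ t > 0, 0 < L t)
    (h₀ : IntegrableOn (postDens a L τ 0) (Ioo 0 1)) :
    0 < ∫ κ in Ioo 0 1, postDens a L τ 0 κ := by
  rw [setIntegral_pos_iff_support_of_nonneg_ae ?_ h₀]
  · refine lt_of_lt_of_le (by simp) (measure_mono fun κ hκ => ⟨?_, hκ⟩)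
    exact (postDens_pos hτ hL 0 hκ).ne'
  · filter_upwards [ae_restrict_mem measurableSet_Ioo] with κ hκ
    exact (postDens_pos hτ hL 0 hκ).le

lemma exp_mul_setIntegral_postDens_zero_le (hτ : τ ≠ 0) (hL : ∀ t > 0, 0 ≤ L t)
    (h₀ : IntegrableOn (postDens a L τ 0) (Ioo 0 1)) (x : ℝ) :
    Real.exp (-(x ^ 2 / 2)) * ∫ κ in Ioo 0 1, postDens a L τ 0 κ ≤
      ∫ κ in Ioo 0 1, postDens a L τ x κ := by
  rw [← integral_const_mul]
  refine setIntegral_mono_on (h₀.const_mul _) (integrableOn_postDens h₀ x) measurableSet_Ioo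
    fun κ hκ => ?_
  rw [postDens_eq_mul_exp x κ, mul_comm (Real.exp _)]
  refine mul_le_mul_of_nonneg_left (Real.exp_le_exp.2 ?_) (postDens_nonneg hτ hL 0 hκ)
  nlinarith [sq_nonneg x, hκ.2]

lemma setIntegral_postDens_le (ha : 0 < a) {M : ℝ} (hτ : τ ≠ 0) (hL : ∀ t > 0, 0 ≤ L t)
    (hLM : ∀ t > 0, L t ≤ M) {x ε : ℝ} (hε : ε ∈ Ioo (0:ℝ) 1)
    (hint : IntegrableOn (postDens a L τ x) (Ioo 0 ε)) :
    ∫ κ in Ioo 0 ε, postDens a L τ x κ ≤ M * (ε ^ a * (1 - ε) ^ (-a) / a) := by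
  obtain ⟨hbeta_int, hbeta⟩ := integral_Ioo_rpow_mul_one_sub_rpow ha hε
  rw [← hbeta, ← integral_const_mul]
  refine setIntegral_mono_on hint (hbeta_int.const_mul M) measurableSet_Ioo fun κ hκ => ?_
  obtain ⟨hκ0, hκε⟩ := hκ
  have hκ1 : κ ∈ Ioo (0:ℝ) 1 := ⟨hκ0, hκε.trans hε.2⟩
  have hu := mul_one_div_sub_one_pos (by positivity : 0 < 1 / τ ^ 2) hκ1
  have h1κ : 0 < 1 - κ := sub_pos.2 hκ1.2
  have hpow : κ ^ (a - 1/2) ≤ κ ^ (a - 1) :=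
    Real.rpow_le_rpow_of_exponent_ge hκ0 hκ1.2.le (by linarith)
  calc postDens a L τ x κ ≤ κ ^ (a - 1/2) * (1 - κ) ^ (-a - 1) * L (1 / τ ^ 2 * (1 / κ - 1)) := by
        have := hL _ hu
        exact mul_le_of_le_one_right (by positivity) (exp_neg_mul_sq_div_two_le_one hκ0.le x)
    _ ≤ M * (κ ^ (a - 1) * (1 - κ) ^ (-a - 1)) := by
        rw [mul_comm M]
        exact mul_le_mul (by gcongr) (hLM _ hu) (hL _ hu) (by positivity)

lemma integrableOn_postDens_zero_and_rpow_mul_integral_eq (hτ : 0 < τ)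
    (hφ : IntegrableOn (fun t => t ^ (-a - 1) * L t) (Ioi 0)) :
    IntegrableOn (postDens a L τ 0) (Ioo 0 1) ∧
      τ ^ (2 * a) * ∫ κ in Ioo 0 1, postDens a L τ 0 κ =
        ∫ u in Ioi 0, u ^ (-a - 1) * L u * (1 + τ ^ 2 * u) ^ (-(1/2) : ℝ) := by
  have hc : 0 < 1 / τ ^ 2 := by positivity
  have hΨ := integrableOn_mul_one_add_sq_mul_rpow (by norm_num : -(1/2) ≤ (0:ℝ)) hφ τ
  have hpt : EqOn (fun κ => 1 / τ ^ 2 / κ ^ 2 * ((1 / τ ^ 2 * (1 / κ - 1)) ^ (-a - 1) *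
        L (1 / τ ^ 2 * (1 / κ - 1)) * (1 + τ ^ 2 * (1 / τ ^ 2 * (1 / κ - 1))) ^ (-(1/2) : ℝ)))
      (fun κ => τ ^ (2 * a) * postDens a L τ 0 κ) (Ioo 0 1) := fun κ hκ => by
    simp only [postDens_zero]
    linear_combination L (1 / τ ^ 2 * (1 / κ - 1)) * div_sq_mul_rpow_mul_rpow_eq a hτ hκ
  rw [integrableOn_Ioi_iff_integrableOn_Ioo_mul_one_div_sub_one hc,
    integrableOn_congr_fun hpt measurableSet_Ioo] at hΨ
  refine ⟨(integrable_const_mul_iff ?_ _).1 hΨ, ?_⟩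
  · exact (Real.rpow_pos_of_pos hτ _).ne'.isUnit
  · rw [integral_Ioi_eq_integral_Ioo_mul_one_div_sub_one hc, setIntegral_congr_fun
      measurableSet_Ioo hpt, integral_const_mul]

lemma setIntegral_postDens_div_le (ha : 0 < a) {M : ℝ} (hτ : τ ≠ 0) (hL : ∀ t > 0, 0 < L t)
    (hLM : ∀ t > 0, L t ≤ M) (h₀ : IntegrableOn (postDens a L τ 0) (Ioo 0 1)) (x : ℝ) {ε : ℝ}
    (hε : ε ∈ Ioo (0:ℝ) 1) :
    (∫ κ in Ioo 0 ε, postDens a L τ x κ) / (∫ κ in Ioo 0 1, postDens a L τ x κ) ≤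
      M * (ε ^ a * (1 - ε) ^ (-a) / a) /
        (Real.exp (-(x ^ 2 / 2)) * ∫ κ in Ioo 0 1, postDens a L τ 0 κ) := by
  have hL0 : ∀ t > 0, 0 ≤ L t := fun t ht => (hL t ht).le
  have hnum := setIntegral_postDens_le ha hτ hL0 hLM hε
    ((integrableOn_postDens h₀ x).mono_set (Ioo_subset_Ioo_right hε.2.le))
  have hnum_nonneg : 0 ≤ ∫ κ in Ioo 0 ε, postDens a L τ x κ :=
    setIntegral_nonneg measurableSet_Ioo fun κ hκ =>
      postDens_nonneg hτ hL0 x ⟨hκ.1, hκ.2.trans hε.2⟩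
  exact div_le_div₀ (hnum_nonneg.trans hnum) hnum
    (mul_pos (Real.exp_pos _) (setIntegral_postDens_zero_pos hτ hL h₀))
    (exp_mul_setIntegral_postDens_zero_le hτ hL0 h₀ x)

end Posterior

theorem concentration_ineq_one_bounded_general (a K M : ℝ) (ha : 0 < a) (L : ℝ → ℝ)
    (hLpos : ∀ t > 0, 0 < L t)
    (hLbdd : ∀ t > 0, L t ≤ M)
    (hnorm : K * ∫ t in Ioi (0:ℝ), t ^ (-a - 1) * L t = 1) :
    ∃ g : ℝ → ℝ, Tendsto g (𝓝[>] 0) (𝓝 0) ∧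
      ∀ τ > 0, ∀ x : ℝ, ∀ ε ∈ Ioo (0:ℝ) 1,
        (∫ κ in Ioo (0:ℝ) ε, postDens a L τ x κ) /
            (∫ κ in Ioo (0:ℝ) 1, postDens a L τ x κ) ≤
          (K * M / a) * ε ^ a * (1 - ε) ^ (-a) * Real.exp (x ^ 2 / 2) *
            τ ^ (2 * a) * (1 + g τ) := by
  have hφ : IntegrableOn (fun t => t ^ (-a - 1) * L t) (Ioi 0) :=
    Integrable.of_integral_ne_zero (right_ne_zero_of_mul_eq_one hnorm)
  set J : ℝ → ℝ := fun τ => ∫ u in Ioi 0, u ^ (-a - 1) * L u * (1 + τ ^ 2 * u) ^ (-(1/2) : ℝ)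
  refine ⟨fun τ => (K * J τ)⁻¹ - 1, ?_, fun τ hτ x ε hε => ?_⟩
  · have hKJ : Tendsto (fun τ => K * J τ) (𝓝[>] 0) (𝓝 1) := by
      rw [← hnorm]
      exact ((tendsto_setIntegral_mul_one_add_sq_mul_rpow (by norm_num) hφ).const_mul K).mono_left
        nhdsWithin_le_nhds
    simpa using (hKJ.inv₀ one_ne_zero).sub_const 1
  · obtain ⟨h₀, hJ⟩ := integrableOn_postDens_zero_and_rpow_mul_integral_eq hτ hφ
    refine (setIntegral_postDens_div_le ha hτ.ne' hLpos hLbdd h₀ x hε).trans_eq ?_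
    have hK : K ≠ 0 := left_ne_zero_of_mul_eq_one hnorm
    have hτa : 0 < τ ^ (2 * a) := Real.rpow_pos_of_pos hτ _
    have hD : ∫ κ in Ioo 0 1, postDens a L τ 0 κ = J τ / τ ^ (2 * a) := by
      rw [eq_div_iff hτa.ne', mul_comm]
      exact hJ
    rw [hD, Real.exp_neg, add_sub_cancel]
    field_simp

/-- Corollary 4.1: if `L ≤ M` on `(0,∞)`, then for any fixed `ε ∈ (0,1)` and `τ > 0`,
`P(κ < ε | x, τ) ≤ (KM/a) ε^a (1-ε)^{-a} e^{x²/2} τ^{2a} (1 + o(1))`,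
the `o(1)` term being uniform in `x` and vanishing as `τ → 0⁺`. -/
theorem concentration_ineq_one_bounded (a K M : ℝ) (ha : 0 < a) (hK : 0 < K)
    (hM : 0 < M) (L : ℝ → ℝ)
    (hLmeas : Measurable L)
    (hLpos : ∀ t > 0, 0 < L t)
    (hLbdd : ∀ t > 0, L t ≤ M)
    (hnorm : K * ∫ t in Ioi (0:ℝ), t ^ (-a - 1) * L t = 1) :
    ∃ g : ℝ → ℝ, Tendsto g (𝓝[>] 0) (𝓝 0) ∧
      ∀ τ > 0, ∀ x : ℝ, ∀ ε ∈ Ioo (0:ℝ) 1,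
        (∫ κ in Ioo (0:ℝ) ε, postDens a L τ x κ) /
            (∫ κ in Ioo (0:ℝ) 1, postDens a L τ x κ) ≤
          (K * M / a) * ε ^ a * (1 - ε) ^ (-a) * Real.exp (x ^ 2 / 2) *
            τ ^ (2 * a) * (1 + g τ) :=
  concentration_ineq_one_bounded_general a K M ha L hLpos hLbdd hnorm
end

section
/- Under the posterior π(κ | x, τ) ∝ κ^{a-1/2}(1-κ)^{-a-1} L((1/τ²)(1/κ-1)) e^{-κx²/2}, for any fixed τ > 0 and fixed η, δ ∈ (0,1), P(κ > η | x, τ) ≤ H(a,η,δ) e^{-η(1-δ)x²/2} / (τ^{2a} Δ(τ²,η,δ)) uniformly in x ∈ ℝ, where H(a,η,δ) = (a+1/2)(1-ηδ)^a / (K(ηδ)^{a+1/2}) and Δ(τ²,η,δ) = ξ(τ²,η,δ) L((1/τ²)(1/(ηδ)-1)), with ξ(τ²,η,δ) = (∫_{(1/τ²)(1/(ηδ)-1)}^∞ t^{-(a+3/2)} L(t) dt) / ((a+1/2)^{-1} ((1/τ²)(1/(ηδ)-1))^{-(a+1/2)} L((1/τ²)(1/(ηδ)-1))). -/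
open MeasureTheory Filter Set Topology

/-!
Write the posterior density as `g(κ) e^{-κx²/2}`. The substitution `κ = 1/(1 + τ²t)` turns
`∫₀^p g` into `τ^{-2a} ∫_s^∞ (1 + τ²t)^{-1/2} t^{-a-1} L(t) dt`,
where `s = (1/τ²)(1/p - 1)`.
On `κ > η` the Gaussian factor is at most `e^{-ηx²/2}` and `(1 + τ²t)^{-1/2} ≤ 1`, so the
numerator is at most `e^{-ηx²/2} τ^{-2a} / K`. Restricting the denominator to `κ < ηδ`,
where the Gaussian factor is at least `e^{-ηδx²/2}` and, for `t > s`,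
`(1 + τ²t)^{-1/2} ≥ τ^{-1} (1 - ηδ)^{1/2} t^{-1/2}`, bounds it below by
`e^{-ηδx²/2} τ^{-2a-1} (1 - ηδ)^{1/2} ∫_s^∞ t^{-a-3/2} L(t) dt`.
After cancelling `L(s)` and expanding `s^{a+1/2}`, the quotient of the two bounds is exactly
the stated one.
-/

noncomputable def shrinkDens (a : ℝ) (L : ℝ → ℝ) (c κ : ℝ) : ℝ :=
  κ ^ (a - 1/2) * (1 - κ) ^ (-a - 1) * L ((1 / c) * (1 / κ - 1))

/-- `shrinkDens a L c` pulled back along `κ = 1 / (1 + c t)`, Jacobian included. -/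
noncomputable def scaleDens (a : ℝ) (L : ℝ → ℝ) (c t : ℝ) : ℝ :=
  c ^ (-a) * ((1 + c * t) ^ (-(1/2) : ℝ) * (t ^ (-a - 1) * L t))

lemma postDens_eq (a : ℝ) (L : ℝ → ℝ) (τ x κ : ℝ) :
    postDens a L τ x κ = shrinkDens a L (τ ^ 2) κ * Real.exp (-(κ * x ^ 2) / 2) :=
  rfl

section Substitution

variable {c b : ℝ}

lemma image_inv_one_add_mul_Ioi (hc : 0 < c) (hb : 0 ≤ b) :
    (fun t : ℝ => (1 + c * t)⁻¹) '' Ioi b = Ioo 0 (1 + c * b)⁻¹ := by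
  have hb' : 0 < 1 + c * b := by nlinarith
  ext κ
  constructor
  · rintro ⟨t, ht, rfl⟩
    have ht' : 1 + c * b < 1 + c * t := by gcongr; exact ht
    exact ⟨inv_pos.2 (hb'.trans ht'), inv_strictAnti₀ hb' ht'⟩
  · rintro ⟨hκ0, hκ⟩
    refine ⟨(κ⁻¹ - 1) / c, ?_, by field_simp; simp⟩
    have : 1 + c * b < κ⁻¹ := (lt_inv_comm₀ hκ0 hb').1 hκ
    rw [mem_Ioi, lt_div_iff₀ hc]
    linarith

lemma hasDerivWithinAt_inv_one_add_mul (hc : 0 < c) (hb : 0 ≤ b) :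
    ∀ t ∈ Ioi b,
      HasDerivWithinAt (fun t : ℝ => (1 + c * t)⁻¹) (-c / (1 + c * t) ^ 2) (Ioi b) t :=
  fun t ht ↦
    have ht0 : 1 + c * t ≠ 0 := by have : b < t := ht; nlinarith
    (by simpa [Pi.inv_def] using (((hasDerivAt_id t).const_mul c).const_add 1).inv ht0 :
      HasDerivAt (fun t : ℝ => (1 + c * t)⁻¹) _ t).hasDerivWithinAt

lemma injOn_inv_one_add_mul (hc : 0 < c) : InjOn (fun t : ℝ => (1 + c * t)⁻¹) (Ioi b) := by
  intro s _ t _ h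
  simpa [hc.ne'] using h

variable (a : ℝ) (L : ℝ → ℝ)

lemma abs_deriv_mul_shrinkDens (hc : 0 < c) {t : ℝ} (ht : 0 < t) :
    |-c / (1 + c * t) ^ 2| * shrinkDens a L c (1 + c * t)⁻¹ = scaleDens a L c t := by
  have hu : 0 < 1 + c * t := by nlinarith
  have habs : |-c / (1 + c * t) ^ 2| = c * (1 + c * t) ^ (-2 : ℝ) := by
    rw [abs_div, abs_neg, abs_of_pos hc, abs_of_pos (by positivity), div_eq_mul_inv,
      Real.rpow_neg hu.le, Real.rpow_two]
  have harg : (1 / c) * (1 / (1 + c * t)⁻¹ - 1) = t := by field_simp; ring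
  have hκ : ((1 + c * t)⁻¹) ^ (a - 1/2) = (1 + c * t) ^ (-(a - 1/2)) := by
    rw [Real.inv_rpow hu.le, ← Real.rpow_neg hu.le]
  have h1κ : (1 - (1 + c * t)⁻¹) ^ (-a - 1) =
      c ^ (-a - 1) * t ^ (-a - 1) * (1 + c * t) ^ (a + 1) := by
    rw [show 1 - (1 + c * t)⁻¹ = c * t / (1 + c * t) by field_simp; ring,
      Real.div_rpow (by positivity) hu.le, Real.mul_rpow hc.le ht.le, div_eq_mul_inv,
      ← Real.rpow_neg hu.le]
    ring_nf
  have hcpow : c * c ^ (-a - 1) = c ^ (-a) := by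
    rw [Real.rpow_sub hc, Real.rpow_one]; field_simp
  have hupow : (1 + c * t) ^ (-2 : ℝ) * ((1 + c * t) ^ (-(a - 1/2)) * (1 + c * t) ^ (a + 1))
      = (1 + c * t) ^ (-(1/2) : ℝ) := by
    rw [← Real.rpow_add hu, ← Real.rpow_add hu]; ring_nf
  calc |-c / (1 + c * t) ^ 2| * shrinkDens a L c (1 + c * t)⁻¹
      = (c * c ^ (-a - 1)) *
          ((1 + c * t) ^ (-2 : ℝ) * ((1 + c * t) ^ (-(a - 1/2)) * (1 + c * t) ^ (a + 1))) *
          (t ^ (-a - 1) * L t) := by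
        rw [shrinkDens, habs, harg, hκ, h1κ]; ring
    _ = scaleDens a L c t := by rw [hcpow, hupow, scaleDens]; ring

lemma integral_shrinkDens_Ioo (hc : 0 < c) (hb : 0 ≤ b) :
    ∫ κ in Ioo 0 (1 + c * b)⁻¹, shrinkDens a L c κ = ∫ t in Ioi b, scaleDens a L c t := by
  rw [← image_inv_one_add_mul_Ioi hc hb, integral_image_eq_integral_abs_deriv_smul
    measurableSet_Ioi (hasDerivWithinAt_inv_one_add_mul hc hb) (injOn_inv_one_add_mul hc)]
  exact setIntegral_congr_fun measurableSet_Ioi fun t ht ↦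
    abs_deriv_mul_shrinkDens a L hc (hb.trans_lt ht)

lemma integrableOn_shrinkDens_Ioo_iff (hc : 0 < c) (hb : 0 ≤ b) :
    IntegrableOn (shrinkDens a L c) (Ioo 0 (1 + c * b)⁻¹) ↔
      IntegrableOn (scaleDens a L c) (Ioi b) := by
  rw [← image_inv_one_add_mul_Ioi hc hb, integrableOn_image_iff_integrableOn_abs_deriv_smul
    measurableSet_Ioi (hasDerivWithinAt_inv_one_add_mul hc hb) (injOn_inv_one_add_mul hc)]
  exact integrableOn_congr_fun (fun t ht ↦ abs_deriv_mul_shrinkDens a L hc (hb.trans_lt ht))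
    measurableSet_Ioi

end Substitution

section Bounds

variable {a c : ℝ} {L : ℝ → ℝ}

lemma shrinkDens_nonneg (hc : 0 < c) (hL0 : ∀ t > 0, 0 ≤ L t) {κ : ℝ}
    (hκ : κ ∈ Ioo 0 1) :
    0 ≤ shrinkDens a L c κ := by
  have hκ1 : 0 < 1 - κ := sub_pos.2 hκ.2
  have harg : 0 < (1 / c) * (1 / κ - 1) := by
    have : 1 < 1 / κ := by rw [lt_div_iff₀ hκ.1, one_mul]; exact hκ.2
    exact mul_pos (by positivity) (by linarith)
  have := hL0 _ harg
  have := hκ.1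
  unfold shrinkDens
  positivity

lemma scaleDens_nonneg (hc : 0 < c) (hL0 : ∀ t > 0, 0 ≤ L t) {t : ℝ} (ht : 0 < t) :
    0 ≤ scaleDens a L c t := by
  have := hL0 t ht
  unfold scaleDens
  positivity

lemma scaleDens_le (hc : 0 < c) (hL0 : ∀ t > 0, 0 ≤ L t) {t : ℝ} (ht : 0 < t) :
    scaleDens a L c t ≤ c ^ (-a) * (t ^ (-a - 1) * L t) := by
  have := hL0 t ht
  have hu : (1 + c * t) ^ (-(1/2) : ℝ) ≤ 1 :=
    Real.rpow_le_one_of_one_le_of_nonpos (by nlinarith) (by norm_num)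
  unfold scaleDens
  exact mul_le_mul_of_nonneg_left (mul_le_of_le_one_left (by positivity) hu) (by positivity)

lemma integral_shrinkDens_le (hc : 0 < c) (hL0 : ∀ t > 0, 0 ≤ L t)
    (hψ : IntegrableOn (fun t ↦ t ^ (-a - 1) * L t) (Ioi 0)) :
    ∫ κ in Ioo 0 1, shrinkDens a L c κ ≤ c ^ (-a) * ∫ t in Ioi 0, t ^ (-a - 1) * L t := by
  have h := integral_shrinkDens_Ioo a L hc le_rfl
  rw [mul_zero, add_zero, inv_one] at h
  rw [h, ← integral_const_mul]
  exact setIntegral_mono_of_nonneg (fun t ht ↦ scaleDens_nonneg hc hL0 ht)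
    (fun t ht ↦ scaleDens_le hc hL0 ht) (hψ.const_mul _)

lemma sqrt_div_mul_rpow_le {p t : ℝ} (hc : 0 < c) (hp : p ≤ 1) (ht : 0 < t)
    (hpt : 1 - p ≤ p * (c * t)) :
    √((1 - p) / c) * t ^ (-(1/2) : ℝ) ≤ (1 + c * t) ^ (-(1/2) : ℝ) := by
  have hu : 0 < 1 + c * t := by nlinarith
  rw [Real.rpow_neg ht.le, Real.rpow_neg hu.le, ← Real.sqrt_eq_rpow, ← Real.sqrt_eq_rpow,
    ← Real.sqrt_inv, ← Real.sqrt_inv, ← Real.sqrt_mul (div_nonneg (by linarith) hc.le)]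
  apply Real.sqrt_le_sqrt
  rw [← div_eq_mul_inv, div_div, div_le_iff₀ (by positivity)]
  field_simp
  nlinarith

lemma le_scaleDens {p t : ℝ} (hc : 0 < c) (hp : p ≤ 1) (ht : 0 < t) (hLt : 0 ≤ L t)
    (hpt : 1 - p ≤ p * (c * t)) :
    c ^ (-a) * √((1 - p) / c) * (t ^ (-(a + 3/2)) * L t) ≤ scaleDens a L c t := by
  have hsplit : t ^ (-(a + 3/2)) = t ^ (-(1/2) : ℝ) * t ^ (-a - 1) := by
    rw [← Real.rpow_add ht]; ring_nf
  calc c ^ (-a) * √((1 - p) / c) * (t ^ (-(a + 3/2)) * L t)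
      = c ^ (-a) * ((√((1 - p) / c) * t ^ (-(1/2) : ℝ)) * (t ^ (-a - 1) * L t)) := by
        rw [hsplit]; ring
    _ ≤ scaleDens a L c t := by
        unfold scaleDens
        gcongr
        exact sqrt_div_mul_rpow_le hc hp ht hpt

lemma integrableOn_scaleDens (hc : 0 < c) (hL : Measurable L) (hL0 : ∀ t > 0, 0 ≤ L t)
    (hψ : IntegrableOn (fun t ↦ t ^ (-a - 1) * L t) (Ioi 0)) :
    IntegrableOn (scaleDens a L c) (Ioi 0) := by
  refine (hψ.const_mul (c ^ (-a))).mono' (by unfold scaleDens; fun_prop) ?_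
  filter_upwards [ae_restrict_mem measurableSet_Ioi] with t ht
  rw [Real.norm_of_nonneg (scaleDens_nonneg hc hL0 ht)]
  exact scaleDens_le hc hL0 ht

lemma integrableOn_shrinkDens (hc : 0 < c) (hL : Measurable L) (hL0 : ∀ t > 0, 0 ≤ L t)
    (hψ : IntegrableOn (fun t ↦ t ^ (-a - 1) * L t) (Ioi 0)) :
    IntegrableOn (shrinkDens a L c) (Ioo 0 1) := by
  simpa using (integrableOn_shrinkDens_Ioo_iff a L hc le_rfl).2
    (integrableOn_scaleDens hc hL hL0 hψ)

lemma one_div_mul_one_div_sub_one_pos {p : ℝ} (hc : 0 < c) (hp : p ∈ Ioo 0 1) :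
    0 < (1 / c) * (1 / p - 1) := by
  have : 1 < 1 / p := by rw [lt_div_iff₀ hp.1]; linarith [hp.2]
  exact mul_pos (by positivity) (by linarith)

lemma le_integral_shrinkDens {p : ℝ} (hc : 0 < c) (hp : p ∈ Ioo 0 1) (hL : Measurable L)
    (hL0 : ∀ t > 0, 0 ≤ L t) (hψ : IntegrableOn (fun t ↦ t ^ (-a - 1) * L t) (Ioi 0)) :
    c ^ (-a) * √((1 - p) / c) * ∫ t in Ioi ((1 / c) * (1 / p - 1)), t ^ (-(a + 3/2)) * L t ≤
      ∫ κ in Ioo 0 p, shrinkDens a L c κ := by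
  have hs := one_div_mul_one_div_sub_one_pos hc hp
  set s := (1 / c) * (1 / p - 1) with hs_def
  have hps : p * (c * s) = 1 - p := by have := hp.1; rw [hs_def]; field_simp
  have h := integral_shrinkDens_Ioo a L hc hs.le
  rw [show (1 + c * s)⁻¹ = p by field_simp; linarith] at h
  rw [h, ← integral_const_mul]
  refine setIntegral_mono_of_nonneg (fun t ht ↦ ?_) (fun t ht ↦ ?_)
    ((integrableOn_scaleDens hc hL hL0 hψ).mono_set (Ioi_subset_Ioi hs.le))
  · have := hL0 t (hs.trans ht)
    have := hs.trans ht
    positivity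
  · have hst : s < t := ht
    have := hp.1
    exact le_scaleDens hc hp.2.le (hs.trans ht) (hL0 t (hs.trans ht))
      (hps.symm.le.trans (by gcongr))

end Bounds

section Tail

variable {a s : ℝ} {L : ℝ → ℝ}

lemma integrableOn_rpow_mul_Ioi (hs : 0 < s) (hL : Measurable L) (hL0 : ∀ t > 0, 0 ≤ L t)
    (hψ : IntegrableOn (fun t ↦ t ^ (-a - 1) * L t) (Ioi 0)) :
    IntegrableOn (fun t ↦ t ^ (-(a + 3/2)) * L t) (Ioi s) := by
  refine ((hψ.mono_set (Ioi_subset_Ioi hs.le)).const_mul (s ^ (-(1/2) : ℝ))).mono'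
    (by fun_prop) ?_
  filter_upwards [ae_restrict_mem measurableSet_Ioi] with t (ht : s < t)
  have ht0 := hs.trans ht
  have := hL0 t ht0
  rw [Real.norm_of_nonneg (by positivity), show -(a + 3/2) = -(1/2) + (-a - 1) by ring,
    Real.rpow_add ht0, mul_assoc]
  exact mul_le_mul_of_nonneg_right (Real.rpow_le_rpow_of_nonpos hs ht.le (by norm_num))
    (by positivity)

lemma integral_rpow_mul_Ioi_pos (hs : 0 < s) (hL : Measurable L) (hLpos : ∀ t > 0, 0 < L t)
    (hψ : IntegrableOn (fun t ↦ t ^ (-a - 1) * L t) (Ioi 0)) :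
    0 < ∫ t in Ioi s, t ^ (-(a + 3/2)) * L t := by
  have hpos : ∀ t ∈ Ioi s, 0 < t ^ (-(a + 3/2)) * L t := fun t ht ↦
    have ht0 : 0 < t := hs.trans ht
    mul_pos (Real.rpow_pos_of_pos ht0 _) (hLpos t ht0)
  rw [setIntegral_pos_iff_support_of_nonneg_ae
    ((ae_restrict_mem measurableSet_Ioi).mono fun t ht ↦ (hpos t ht).le)
    (integrableOn_rpow_mul_Ioi hs hL (fun t ht ↦ (hLpos t ht).le) hψ),
    show Function.support (fun t ↦ t ^ (-(a + 3/2)) * L t) ∩ Ioi s = Ioi s from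
      inter_eq_right.2 fun t ht ↦ (hpos t ht).ne', Real.volume_Ioi]
  exact ENNReal.zero_lt_top

end Tail

section Gaussian

variable {g : ℝ → ℝ}

lemma integrableOn_mul_exp_neg_mul_sq_Ioo (hg : IntegrableOn g (Ioo 0 1)) (x : ℝ) :
    IntegrableOn (fun κ ↦ g κ * Real.exp (-(κ * x ^ 2) / 2)) (Ioo 0 1) := by
  refine hg.mul_bdd (c := 1) (by fun_prop) ?_
  filter_upwards [ae_restrict_mem measurableSet_Ioo] with κ hκ
  rw [Real.norm_of_nonneg (Real.exp_pos _).le, Real.exp_le_one_iff]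
  have := hκ.1
  have := sq_nonneg x
  have : 0 ≤ κ * x ^ 2 := by positivity
  linarith

lemma setIntegral_Ioo_mul_exp_le (hg : IntegrableOn g (Ioo 0 1))
    (hg0 : ∀ κ ∈ Ioo 0 1, 0 ≤ g κ) {η : ℝ} (hη : 0 ≤ η) (x : ℝ) :
    ∫ κ in Ioo η 1, g κ * Real.exp (-(κ * x ^ 2) / 2) ≤
      Real.exp (-(η * x ^ 2) / 2) * ∫ κ in Ioo 0 1, g κ := by
  have hsub : Ioo η 1 ⊆ Ioo 0 1 := Ioo_subset_Ioo_left hη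
  calc ∫ κ in Ioo η 1, g κ * Real.exp (-(κ * x ^ 2) / 2)
      ≤ ∫ κ in Ioo η 1, Real.exp (-(η * x ^ 2) / 2) * g κ := by
        refine setIntegral_mono_of_nonneg (fun κ hκ ↦ ?_) (fun κ hκ ↦ ?_)
          ((hg.mono_set hsub).const_mul _)
        · have := hg0 κ (hsub hκ)
          positivity
        · rw [mul_comm]
          gcongr
          · exact hg0 κ (hsub hκ)
          · exact hκ.1.le
    _ = Real.exp (-(η * x ^ 2) / 2) * ∫ κ in Ioo η 1, g κ := integral_const_mul _ _
    _ ≤ Real.exp (-(η * x ^ 2) / 2) * ∫ κ in Ioo 0 1, g κ :=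
        mul_le_mul_of_nonneg_left (setIntegral_mono_set hg
          ((ae_restrict_mem measurableSet_Ioo).mono hg0) hsub.eventuallyLE) (Real.exp_pos _).le

lemma exp_mul_setIntegral_Ioo_le (hg : IntegrableOn g (Ioo 0 1))
    (hg0 : ∀ κ ∈ Ioo 0 1, 0 ≤ g κ) {p : ℝ} (hp : p ≤ 1) (x : ℝ) :
    Real.exp (-(p * x ^ 2) / 2) * ∫ κ in Ioo 0 p, g κ ≤
      ∫ κ in Ioo 0 1, g κ * Real.exp (-(κ * x ^ 2) / 2) := by
  have hsub : Ioo 0 p ⊆ Ioo 0 1 := Ioo_subset_Ioo_right hp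
  have hint := integrableOn_mul_exp_neg_mul_sq_Ioo hg x
  calc Real.exp (-(p * x ^ 2) / 2) * ∫ κ in Ioo 0 p, g κ
      = ∫ κ in Ioo 0 p, Real.exp (-(p * x ^ 2) / 2) * g κ := (integral_const_mul _ _).symm
    _ ≤ ∫ κ in Ioo 0 p, g κ * Real.exp (-(κ * x ^ 2) / 2) := by
        refine setIntegral_mono_of_nonneg (fun κ hκ ↦ ?_) (fun κ hκ ↦ ?_)
          (hint.mono_set hsub)
        · have := hg0 κ (hsub hκ)
          positivity
        · rw [mul_comm]
          gcongr
          · exact hg0 κ (hsub hκ)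
          · exact hκ.2.le
    _ ≤ ∫ κ in Ioo 0 1, g κ * Real.exp (-(κ * x ^ 2) / 2) :=
        setIntegral_mono_set hint
          ((ae_restrict_mem measurableSet_Ioo).mono fun κ hκ ↦
            mul_nonneg (hg0 κ hκ) (Real.exp_pos _).le)
          hsub.eventuallyLE

end Gaussian

lemma one_div_mul_one_div_sub_one_rpow_neg {τ p r : ℝ} (hτ : 0 < τ) (hp : p ∈ Ioo 0 1) :
    ((1 / τ ^ 2) * (1 / p - 1)) ^ (-r) = (τ ^ 2) ^ r * p ^ r / (1 - p) ^ r := by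
  obtain ⟨hp0, hp1⟩ := hp
  have hq : 0 < 1 - p := sub_pos.2 hp1
  rw [show (1 / τ ^ 2) * (1 / p - 1) = (1 - p) / (τ ^ 2 * p) by field_simp,
    Real.rpow_neg (by positivity), Real.div_rpow hq.le (by positivity),
    Real.mul_rpow (by positivity) hp0.le, inv_div]

lemma concentration_bound_eq {a K τ p J l E : ℝ} (ha : a + 1/2 ≠ 0) (hK : K ≠ 0)
    (hτ : 0 < τ) (hp : p ∈ Ioo 0 1) (hJ : J ≠ 0) (hl : l ≠ 0) :
    E * K⁻¹ / (√((1 - p) / τ ^ 2) * J) =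
      (a + 1/2) * (1 - p) ^ a / (K * p ^ (a + 1/2)) * E /
        (τ ^ (2 * a) *
          ((J / ((a + 1/2)⁻¹ * ((1 / τ ^ 2) * (1 / p - 1)) ^ (-(a + 1/2)) * l)) * l)) := by
  have hq : 0 < 1 - p := sub_pos.2 hp.2
  have hp0 := hp.1
  have hτpow : (τ ^ 2) ^ (a + 1/2) = τ ^ (2 * a) * τ := by
    rw [← Real.rpow_natCast, ← Real.rpow_mul hτ.le,
      show ((2 : ℕ) : ℝ) * (a + 1/2) = 2 * a + 1 by push_cast; ring, Real.rpow_add hτ,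
      Real.rpow_one]
  have hqpow : (1 - p) ^ (a + 1/2) = (1 - p) ^ a * √(1 - p) := by
    rw [Real.rpow_add hq, Real.sqrt_eq_rpow]
  rw [one_div_mul_one_div_sub_one_rpow_neg hτ hp, hτpow, hqpow, Real.sqrt_div' _ (sq_nonneg τ),
    Real.sqrt_sq hτ.le]
  have : 0 < √(1 - p) := Real.sqrt_pos.2 hq
  have : 0 < τ ^ (2 * a) := by positivity
  have : 0 < p ^ (a + 1/2) := by positivity
  have : 0 < (1 - p) ^ a := by positivity
  have : a * 2 + 1 ≠ 0 := fun h ↦ ha (by linarith)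
  field_simp

theorem integral_postDens_ratio_le {a τ η p : ℝ} {L : ℝ → ℝ} (hL : Measurable L)
    (hLpos : ∀ t > 0, 0 < L t) (hψ : IntegrableOn (fun t ↦ t ^ (-a - 1) * L t) (Ioi 0))
    (hτ : τ ≠ 0) (hη : 0 ≤ η) (hp : p ∈ Ioo 0 1) (x : ℝ) :
    (∫ κ in Ioo η 1, postDens a L τ x κ) / (∫ κ in Ioo 0 1, postDens a L τ x κ) ≤
      Real.exp (-((η - p) * x ^ 2) / 2) * (∫ t in Ioi 0, t ^ (-a - 1) * L t) /
        (√((1 - p) / τ ^ 2) *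
          ∫ t in Ioi ((1 / τ ^ 2) * (1 / p - 1)), t ^ (-(a + 3/2)) * L t) := by
  have hc : 0 < τ ^ 2 := by positivity
  have hL0 : ∀ t > 0, 0 ≤ L t := fun t ht ↦ (hLpos t ht).le
  have hg := integrableOn_shrinkDens hc hL hL0 hψ
  have hg0 : ∀ κ ∈ Ioo 0 1, 0 ≤ shrinkDens a L (τ ^ 2) κ :=
    fun κ hκ ↦ shrinkDens_nonneg hc hL0 hκ
  have hJ := integral_rpow_mul_Ioi_pos (one_div_mul_one_div_sub_one_pos hc hp) hL hLpos hψ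
  have hI : 0 ≤ ∫ t in Ioi 0, t ^ (-a - 1) * L t :=
    setIntegral_nonneg measurableSet_Ioi fun t ht ↦
      (mul_pos (Real.rpow_pos_of_pos ht _) (hLpos t ht)).le
  have hq : 0 < √((1 - p) / τ ^ 2) := Real.sqrt_pos.2 (div_pos (sub_pos.2 hp.2) hc)
  simp only [postDens_eq]
  have hN := (setIntegral_Ioo_mul_exp_le hg hg0 hη x).trans
    (mul_le_mul_of_nonneg_left (integral_shrinkDens_le hc hL0 hψ) (Real.exp_pos _).le)
  have hD := (mul_le_mul_of_nonneg_left (le_integral_shrinkDens hc hp hL hL0 hψ)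
    (Real.exp_pos _).le).trans (exp_mul_setIntegral_Ioo_le hg hg0 hp.2.le x)
  refine (div_le_div₀ (by positivity) hN (by positivity) hD).trans_eq ?_
  rw [show -(η * x ^ 2) / 2 = -((η - p) * x ^ 2) / 2 + -(p * x ^ 2) / 2 by ring, Real.exp_add]
  field_simp

theorem concentration_ineq_two_general (a K : ℝ) (ha : 0 < a) (L : ℝ → ℝ)
    (hLmeas : Measurable L)
    (hLpos : ∀ t > 0, 0 < L t)
    (hnorm : K * ∫ t in Ioi (0:ℝ), t ^ (-a - 1) * L t = 1)
    (η δ τ : ℝ) (hη : η ∈ Ioo (0:ℝ) 1) (hδ : δ ∈ Ioo (0:ℝ) 1) (hτ : 0 < τ)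
    (x : ℝ) :
    (∫ κ in Ioo η 1, postDens a L τ x κ) /
        (∫ κ in Ioo (0:ℝ) 1, postDens a L τ x κ) ≤
      ((a + 1/2) * (1 - η * δ) ^ a / (K * (η * δ) ^ (a + 1/2))) *
          Real.exp (-(η * (1 - δ) * x ^ 2) / 2) /
        (τ ^ (2 * a) *
          (((∫ t in Ioi ((1 / τ ^ 2) * (1 / (η * δ) - 1)), t ^ (-(a + 3/2)) * L t) /
              ((a + 1/2)⁻¹ * ((1 / τ ^ 2) * (1 / (η * δ) - 1)) ^ (-(a + 1/2)) *
                L ((1 / τ ^ 2) * (1 / (η * δ) - 1)))) *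
            L ((1 / τ ^ 2) * (1 / (η * δ) - 1)))) := by
  have hψ : IntegrableOn (fun t ↦ t ^ (-a - 1) * L t) (Ioi 0) := by
    by_contra h
    rw [integral_undef h, mul_zero] at hnorm
    exact zero_ne_one hnorm
  have hp : η * δ ∈ Ioo 0 1 :=
    ⟨mul_pos hη.1 hδ.1, mul_lt_one_of_nonneg_of_lt_one_left hη.1.le hη.2 hδ.2.le⟩
  have hs := one_div_mul_one_div_sub_one_pos (pow_pos hτ 2) hp
  refine (integral_postDens_ratio_le hLmeas hLpos hψ hτ.ne' hη.1.le hp x).trans_eq ?_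
  rw [eq_inv_of_mul_eq_one_right hnorm, show η * (1 - δ) = η - η * δ by ring]
  exact concentration_bound_eq (by positivity : (0 : ℝ) < a + 1/2).ne'
    (left_ne_zero_of_mul_eq_one hnorm) hτ hp
    (integral_rpow_mul_Ioi_pos hs hLmeas hLpos hψ).ne' (hLpos _ hs).ne'

/-- Theorem 4.3 (second concentration inequality): for any fixed `τ > 0` and
fixed `η, δ ∈ (0,1)`,
`P(κ > η | x, τ) ≤ H(a,η,δ) e^{-η(1-δ)x²/2} / (τ^{2a} Δ(τ²,η,δ))`
uniformly in `x ∈ ℝ`. -/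
theorem concentration_ineq_two (a K : ℝ) (ha : 0 < a) (hK : 0 < K) (L : ℝ → ℝ)
    (hLmeas : Measurable L)
    (hLpos : ∀ t > 0, 0 < L t)
    (hnorm : K * ∫ t in Ioi (0:ℝ), t ^ (-a - 1) * L t = 1)
    (η δ τ : ℝ) (hη : η ∈ Ioo (0:ℝ) 1) (hδ : δ ∈ Ioo (0:ℝ) 1) (hτ : 0 < τ)
    (x : ℝ) :
    (∫ κ in Ioo η 1, postDens a L τ x κ) /
        (∫ κ in Ioo (0:ℝ) 1, postDens a L τ x κ) ≤
      ((a + 1/2) * (1 - η * δ) ^ a / (K * (η * δ) ^ (a + 1/2))) *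
          Real.exp (-(η * (1 - δ) * x ^ 2) / 2) /
        (τ ^ (2 * a) *
          (((∫ t in Ioi ((1 / τ ^ 2) * (1 / (η * δ) - 1)), t ^ (-(a + 3/2)) * L t) /
              ((a + 1/2)⁻¹ * ((1 / τ ^ 2) * (1 / (η * δ) - 1)) ^ (-(a + 1/2)) *
                L ((1 / τ ^ 2) * (1 / (η * δ) - 1)))) *
            L ((1 / τ ^ 2) * (1 / (η * δ) - 1)))) :=
  concentration_ineq_two_general a K ha L hLmeas hLpos hnorm η δ τ hη hδ hτ x
end
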